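/- Let 𝕋 = ℝ/ℤ be the circle group with its usual topology. There exists a countable torsion subgroup H of G = 𝕋^ℕ (with the product topology) that is weakly controllable in G but not controllable in G. -/

import Mathlib

/-!
Let `t = 1/3 ∈ 𝕋` and let `a k` be dyadic rationals converging to `t`. Take `H` generated by the
constant sequence `t̄` and the finitely supported `g k = (a k, t, …, t, 0, …)` (`t` in coordinates
`1, …, k`). Since `g k → t̄`, `H` is weakly controllable. Every element of `H` is `c • t̄` plus a
finitely supported sequence with dyadic `0`-th coordinate; if it is finitely supported itself,
then `c • t = 0`, so its `0`-th coordinate is dyadic and differs from `t̄ 0 = 1/3`. Thus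
`p_J(H) ≠ p_J(H ∩ ⊕ 𝕋)` for `J = {0}`. Countability and torsion are inherited from the generators.
-/

/-- Projection of an element of the direct product `ℕ → M` to the coordinates
in `J`. -/
def proj {M : Type*} (J : Set ℕ) (g : ℕ → M) : J → M :=
  fun j => g j

/-- A subgroup `H` of the direct product `G = M^ℕ` is *controllable* in `G` if
`p_J(H) = p_J(H ∩ ⊕_{n ∈ ℕ} M)` for every finite `J ⊆ ℕ`. -/
def Controllable {M : Type*} [AddCommGroup M] (H : AddSubgroup (ℕ → M)) : Prop :=
  ∀ J : Set ℕ, J.Finite →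
    proj J '' (H : Set (ℕ → M)) =
      proj J '' ((H : Set (ℕ → M)) ∩ {g | {n | g n ≠ 0}.Finite})

/-- A subgroup `H` of the direct product `G = M^ℕ` of a topological abelian
group is *weakly controllable* in `G` if `H ∩ ⊕_{n ∈ ℕ} M` is dense in `H`
(with respect to the Tychonoff product topology). -/
def WeaklyControllable {M : Type*} [AddCommGroup M] [TopologicalSpace M]
    (H : AddSubgroup (ℕ → M)) : Prop :=
  (H : Set (ℕ → M)) ⊆ closure ((H : Set (ℕ → M)) ∩ {g | {n | g n ≠ 0}.Finite})

open Filter Topology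

section FiniteSupport

variable {ι M : Type*}

def finiteSupport [AddGroup M] : AddSubgroup (ι → M) where
  carrier := {g | g.support.Finite}
  zero_mem' := by simp
  add_mem' ha hb := (ha.union hb).subset (Function.support_add _ _)
  neg_mem' {g} (ha : g.support.Finite) :=
    show (-g).support.Finite by rwa [Function.support_neg]

theorem mem_finiteSupport [AddGroup M] {g : ι → M} : g ∈ finiteSupport ↔ g.support.Finite :=
  Iff.rfl

theorem const_mem_finiteSupport_iff [AddGroup M] [Infinite ι] {a : M} :
    (fun _ => a : ι → M) ∈ finiteSupport ↔ a = 0 := by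
  by_cases ha : a = 0
  · simp [ha, mem_finiteSupport]
  · simp [ha, mem_finiteSupport, Function.support_const, Set.infinite_univ_iff.2 inferInstance]

end FiniteSupport

theorem Set.Countable.addSubgroup_closure {G : Type*} [AddCommGroup G] {s : Set G}
    (hs : s.Countable) : (AddSubgroup.closure s : Set G).Countable := by
  have := hs.to_subtype
  rw [← Subtype.range_coe (s := s)]
  refine (Set.countable_range fun a : s →₀ ℤ => a.sum fun i n => n • (i : G)).mono ?_
  intro x hx
  obtain ⟨a, rfl⟩ := AddSubgroup.mem_closure_range_iff.1 hx
  exact ⟨a, rfl⟩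

theorem not_controllable_of_forall_apply_ne {M : Type*} [AddCommGroup M]
    {H : AddSubgroup (ℕ → M)} {h : ℕ → M} (hh : h ∈ H) (i : ℕ)
    (hne : ∀ x ∈ H, x ∈ finiteSupport → x i ≠ h i) : ¬ Controllable H := by
  intro hH
  obtain ⟨x, ⟨hxH, hx⟩, hxh⟩ :=
    hH {i} (Set.finite_singleton i) ▸ Set.mem_image_of_mem (proj {i}) hh
  exact hne x hxH hx (congrFun hxh ⟨i, rfl⟩)

section Approximant

variable {M : Type*} [AddCommGroup M] (t : M) (a : ℕ → M)

def approximant (k : ℕ) : ℕ → M :=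
  fun n => if n = 0 then a k else if n ≤ k then t else 0

def approximantSubgroup : AddSubgroup (ℕ → M) :=
  AddSubgroup.closure (insert (fun _ => t) (Set.range (approximant t a)))

variable {t a}

theorem approximant_mem_finiteSupport (k : ℕ) : approximant t a k ∈ finiteSupport := by
  refine (Set.finite_Iic k).subset fun n hn => ?_
  by_contra hnk
  simp_all [approximant, Nat.ne_zero_of_lt (not_le.1 hnk)]

theorem approximant_mem_approximantSubgroup (k : ℕ) :
    approximant t a k ∈ approximantSubgroup t a :=
  AddSubgroup.subset_closure (Set.mem_insert_of_mem _ ⟨k, rfl⟩)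

theorem const_mem_approximantSubgroup : (fun _ => t) ∈ approximantSubgroup t a :=
  AddSubgroup.subset_closure (Set.mem_insert _ _)

theorem countable_approximantSubgroup : (approximantSubgroup t a : Set (ℕ → M)).Countable :=
  ((Set.countable_range _).insert _).addSubgroup_closure

theorem isOfFinAddOrder_approximant {k : ℕ} (ht : IsOfFinAddOrder t)
    (ha : IsOfFinAddOrder (a k)) : IsOfFinAddOrder (approximant t a k) := by
  refine isOfFinAddOrder_iff_nsmul_eq_zero.2
    ⟨addOrderOf (a k) * addOrderOf t, Nat.mul_pos ha.addOrderOf_pos ht.addOrderOf_pos, ?_⟩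
  funext n
  simp only [approximant, Pi.smul_apply, Pi.zero_apply]
  split_ifs
  · rw [mul_nsmul, addOrderOf_nsmul_eq_zero, nsmul_zero]
  · rw [mul_comm, mul_nsmul, addOrderOf_nsmul_eq_zero, nsmul_zero]
  · exact nsmul_zero _

theorem isOfFinAddOrder_of_mem_approximantSubgroup (ht : IsOfFinAddOrder t)
    (ha : ∀ k, IsOfFinAddOrder (a k)) {x : ℕ → M} (hx : x ∈ approximantSubgroup t a) :
    IsOfFinAddOrder x := by
  suffices approximantSubgroup t a ≤ AddCommGroup.torsion (ℕ → M) from this hx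
  refine AddSubgroup.closure_le _ |>.2 ?_
  rintro _ (rfl | ⟨k, rfl⟩)
  · exact isOfFinAddOrder_iff_nsmul_eq_zero.2
      ⟨addOrderOf t, ht.addOrderOf_pos, funext fun _ => addOrderOf_nsmul_eq_zero t⟩
  · exact isOfFinAddOrder_approximant ht (ha k)

theorem tendsto_approximant [TopologicalSpace M] (ha : Tendsto a atTop (𝓝 t)) :
    Tendsto (approximant t a) atTop (𝓝 fun _ => t) := by
  refine tendsto_pi_nhds.2 fun n => ?_
  rcases Nat.eq_zero_or_pos n with rfl | hn
  · simpa [approximant] using ha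
  · refine tendsto_const_nhds.congr' ?_
    filter_upwards [eventually_ge_atTop n] with k hk
    simp [approximant, hn.ne', hk]

theorem weaklyControllable_approximantSubgroup [TopologicalSpace M] [IsTopologicalAddGroup M]
    (ha : Tendsto a atTop (𝓝 t)) : WeaklyControllable (approximantSubgroup t a) := by
  let D := approximantSubgroup t a ⊓ finiteSupport
  suffices approximantSubgroup t a ≤ D.topologicalClosure from fun x hx => this hx
  refine AddSubgroup.closure_le _ |>.2 ?_
  have hD (k : ℕ) : approximant t a k ∈ D :=
    ⟨approximant_mem_approximantSubgroup k, approximant_mem_finiteSupport k⟩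
  rintro _ (rfl | ⟨k, rfl⟩)
  · exact mem_closure_of_tendsto (tendsto_approximant ha) (Eventually.of_forall hD)
  · exact subset_closure (hD k)

theorem apply_zero_mem_of_mem_approximantSubgroup {A : AddSubgroup M} (ha : ∀ k, a k ∈ A)
    {x : ℕ → M} (hx : x ∈ approximantSubgroup t a) (hfin : x ∈ finiteSupport) : x 0 ∈ A := by
  let D : AddSubgroup (ℕ → M) := finiteSupport ⊓ A.comap (Pi.evalAddMonoidHom (fun _ => M) 0)
  have hle : approximantSubgroup t a ≤ AddSubgroup.zmultiples (fun _ => t) ⊔ D := by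
    refine AddSubgroup.closure_le _ |>.2 ?_
    rintro _ (rfl | ⟨k, rfl⟩)
    · exact AddSubgroup.mem_sup_left (AddSubgroup.mem_zmultiples _)
    · exact AddSubgroup.mem_sup_right
        ⟨approximant_mem_finiteSupport k, by simpa [approximant] using ha k⟩
  obtain ⟨_, ⟨c, rfl⟩, y, ⟨hyfin, hy0⟩, rfl⟩ := AddSubgroup.mem_sup.1 (hle hx)
  have hc : c • t = 0 := by
    have := finiteSupport.sub_mem hfin hyfin
    rw [add_sub_cancel_right] at this
    exact const_mem_finiteSupport_iff.1 this
  simpa [hc] using hy0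

theorem not_controllable_approximantSubgroup {A : AddSubgroup M} (ha : ∀ k, a k ∈ A)
    (ht : t ∉ A) : ¬ Controllable (approximantSubgroup t a) :=
  not_controllable_of_forall_apply_ne const_mem_approximantSubgroup 0 fun _ hx hfin h0 =>
    ht (h0 ▸ apply_zero_mem_of_mem_approximantSubgroup ha hx hfin)

end Approximant

local notation "𝕋" => AddCircle (1 : ℝ)

namespace AddCircle

noncomputable def third : 𝕋 := ((1 / 3 : ℝ) : 𝕋)

noncomputable def dyadicApprox (k : ℕ) : 𝕋 := ((⌊1 / 3 * (2 : ℝ) ^ k⌋₊ / 2 ^ k : ℝ) : 𝕋)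

theorem addOrderOf_third : addOrderOf third = 3 := by
  simpa [third] using addOrderOf_period_div (p := (1 : ℝ)) (n := 3) three_pos

theorem third_not_mem_primaryComponent_two : third ∉ AddCommGroup.primaryComponent 𝕋 2 := by
  rw [AddCommGroup.mem_primaryComponent_iff_addOrderOf, addOrderOf_third]
  rintro ⟨_ | n, hn⟩
  · norm_num at hn
  · rw [pow_succ] at hn
    omega

theorem isOfFinAddOrder_third : IsOfFinAddOrder third :=
  addOrderOf_pos_iff.1 (addOrderOf_third ▸ three_pos)

theorem two_pow_nsmul_dyadicApprox (k : ℕ) : 2 ^ k • dyadicApprox k = 0 := by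
  rw [dyadicApprox, ← coe_nsmul, nsmul_eq_mul, Nat.cast_pow, Nat.cast_ofNat,
    mul_div_cancel₀ _ (by positivity)]
  exact (coe_eq_zero_iff 1).2 ⟨⌊1 / 3 * (2 : ℝ) ^ k⌋₊, by simp⟩

theorem dyadicApprox_mem_primaryComponent_two (k : ℕ) :
    dyadicApprox k ∈ AddCommGroup.primaryComponent 𝕋 2 :=
  ⟨k, two_pow_nsmul_dyadicApprox k⟩

theorem isOfFinAddOrder_dyadicApprox (k : ℕ) : IsOfFinAddOrder (dyadicApprox k) :=
  isOfFinAddOrder_iff_nsmul_eq_zero.2 ⟨2 ^ k, by positivity, two_pow_nsmul_dyadicApprox k⟩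

theorem tendsto_dyadicApprox : Tendsto dyadicApprox atTop (𝓝 third) :=
  ((AddCircle.continuous_mk' 1).tendsto _).comp <|
    (tendsto_nat_floor_mul_div_atTop (by norm_num)).comp
      (tendsto_pow_atTop_atTop_of_one_lt one_lt_two)

end AddCircle

theorem exists_countable_torsion_weaklyControllable_not_controllable_circle :
    ∃ H : AddSubgroup (ℕ → AddCircle (1 : ℝ)),
      (H : Set (ℕ → AddCircle (1 : ℝ))).Countable ∧
      (∀ h ∈ H, IsOfFinAddOrder h) ∧
      WeaklyControllable H ∧ ¬ Controllable H :=
  ⟨approximantSubgroup AddCircle.third AddCircle.dyadicApprox, countable_approximantSubgroup,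
    fun _ => isOfFinAddOrder_of_mem_approximantSubgroup AddCircle.isOfFinAddOrder_third
      AddCircle.isOfFinAddOrder_dyadicApprox,
    weaklyControllable_approximantSubgroup AddCircle.tendsto_dyadicApprox,
    not_controllable_approximantSubgroup AddCircle.dyadicApprox_mem_primaryComponent_two
      AddCircle.third_not_mem_primaryComponent_two⟩
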